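/- Suppose p_{1,n} = δ_{n,0} and, for all k ≥ 2 and n ≥ 0, the coefficients satisfy p_{k,n} = Σ_{j=1}^{k−1} Σ_{ℓ=0}^{n} G_{k−j,j} p_{k−j,ℓ} p_{j,n−ℓ} + 2Σ_{j=1}^{n} Σ_{ℓ=0}^{n−j} G_{k+j,−j} p_{k+j,ℓ} p_{j,n−(j+ℓ)}. Then for every m ≥ 1 and every n ≥ 0, p_{2^m,n} = (∏_{j=0}^{m−1} (γ_{2^{m−j}})^{2^j}) δ_{n,0}. -/

import Mathlib

/-!
Every coefficient `G_{i,j}` with `i - j` even and nonzero vanishes, because `Γ` vanishes at the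
nonzero integers. For `k = 2t` this kills the whole second sum of the recursion and every term of
the first except `j = t`, leaving `p_{2t,n} = γ_{2t} Σ_ℓ p_{t,ℓ} p_{t,n-ℓ}`. Starting from
`p_{1,n} = δ_{n,0}`, induction on `m` shows that `p_{2^m,·}` is a multiple of `δ_{·,0}` whose
factor gets squared and multiplied by `γ_{2^{m+1}}` at each doubling.
-/

open Real

/-- Maxwellian kernel transform: `Γ(u) = sin(πu)/(πu)` for `u ≠ 0`, `Γ(0) = 1`. -/
noncomputable def Gam (u : ℝ) : ℝ :=
  if u = 0 then 1 else Real.sin (π * u) / (π * u)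

/-- `G_{i,j} = γ_{i+j} Γ((i-j)/2) / (1 - 2γ_{i+j}Γ((i+j)/2))`. -/
noncomputable def Gc (γ : ℤ → ℝ) (i j : ℤ) : ℝ :=
  γ (i + j) * Gam (((i : ℝ) - (j : ℝ)) / 2) / (1 - 2 * γ (i + j) * Gam (((i : ℝ) + (j : ℝ)) / 2))

open Finset

lemma Gam_intCast_eq_zero {z : ℤ} (hz : z ≠ 0) : Gam z = 0 := by
  rw [Gam, if_neg (by exact_mod_cast hz), mul_comm, Real.sin_int_mul_pi, zero_div]

lemma Gc_eq_zero_of_sub_eq_two_mul (γ : ℤ → ℝ) {i j z : ℤ} (hz : z ≠ 0) (h : i - j = 2 * z) :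
    Gc γ i j = 0 := by
  have half_sub : ((i : ℝ) - j) / 2 = z := by
    rw [show (i : ℝ) - j = 2 * z by exact_mod_cast h]
    ring
  rw [Gc, half_sub, Gam_intCast_eq_zero hz, mul_zero, zero_div]

lemma Gc_self (γ : ℤ → ℝ) {t : ℤ} (ht : t ≠ 0) : Gc γ t t = γ (2 * t) := by
  rw [Gc, sub_self, zero_div, show ((t : ℝ) + t) / 2 = t by ring, Gam_intCast_eq_zero ht,
    ← two_mul]
  simp [Gam]

def IsCoeffRecursion (γ : ℤ → ℝ) (p : ℕ → ℕ → ℝ) : Prop :=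
  ∀ k : ℕ, 2 ≤ k → ∀ n : ℕ,
    p k n = (∑ j ∈ Ico 1 k, ∑ l ∈ range (n + 1),
        Gc γ ((k : ℤ) - (j : ℤ)) (j : ℤ) * p (k - j) l * p j (n - l))
      + 2 * ∑ j ∈ Icc 1 n, ∑ l ∈ range (n - j + 1),
          Gc γ ((k : ℤ) + (j : ℤ)) (-(j : ℤ)) * p (k + j) l * p j (n - (j + l))

lemma IsCoeffRecursion.apply_two_mul {γ : ℤ → ℝ} {p : ℕ → ℕ → ℝ} (hrec : IsCoeffRecursion γ p)
    {t : ℕ} (ht : 1 ≤ t) (n : ℕ) :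
    p (2 * t) n = γ (2 * t) * ∑ l ∈ range (n + 1), p t l * p t (n - l) := by
  have second_sum_eq_zero : ∑ j ∈ Icc 1 n, ∑ l ∈ range (n - j + 1),
      Gc γ (((2 * t : ℕ) : ℤ) + j) (-(j : ℤ)) * p (2 * t + j) l * p j (n - (j + l)) = 0 := by
    refine sum_eq_zero fun j hj => sum_eq_zero fun l _ => ?_
    have hj : 1 ≤ j := (mem_Icc.mp hj).1
    rw [Gc_eq_zero_of_sub_eq_two_mul γ (z := t + j) (by omega) (by push_cast; ring),
      zero_mul, zero_mul]
  have off_diagonal_eq_zero : ∀ j ∈ Ico 1 (2 * t), j ≠ t → ∑ l ∈ range (n + 1),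
      Gc γ (((2 * t : ℕ) : ℤ) - j) j * p (2 * t - j) l * p j (n - l) = 0 := by
    refine fun j _ hjt => sum_eq_zero fun l _ => ?_
    rw [Gc_eq_zero_of_sub_eq_two_mul γ (z := t - j) (by omega) (by push_cast; ring),
      zero_mul, zero_mul]
  rw [hrec (2 * t) (by omega) n, second_sum_eq_zero, mul_zero, add_zero,
    sum_eq_single_of_mem t (by rw [mem_Ico]; omega) off_diagonal_eq_zero,
    show ((2 * t : ℕ) : ℤ) - t = t by push_cast; ring, show 2 * t - t = t by omega,
    Gc_self γ (by omega), mul_sum]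
  simp only [mul_assoc]

lemma sum_range_mul_ite_mul_mul_ite {R : Type*} [Semiring R] (a b : R) (n : ℕ) :
    ∑ l ∈ range (n + 1), (a * if l = 0 then 1 else 0) * (b * if n - l = 0 then 1 else 0) =
      a * b * if n = 0 then 1 else 0 := by
  rw [sum_eq_single_of_mem 0 (by simp) fun l _ hl => by simp [hl]]
  by_cases hn : n = 0 <;> simp [hn]

lemma prod_range_succ_pow_two_pow {M : Type*} [CommMonoid M] (f : ℕ → M) (m : ℕ) :
    ∏ j ∈ range (m + 1), f (m + 1 - j) ^ 2 ^ j =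
      f (m + 1) * (∏ j ∈ range m, f (m - j) ^ 2 ^ j) ^ 2 := by
  rw [prod_range_succ', ← prod_pow, mul_comm]
  simp only [Nat.add_sub_add_right, pow_succ, pow_mul, Nat.sub_zero, pow_zero, pow_one]

lemma IsCoeffRecursion.apply_two_pow {γ : ℤ → ℝ} {p : ℕ → ℕ → ℝ} (hrec : IsCoeffRecursion γ p)
    (hp1 : ∀ n : ℕ, p 1 n = if n = 0 then 1 else 0) (m n : ℕ) :
    p (2 ^ m) n = (∏ j ∈ range m, γ (2 ^ (m - j)) ^ 2 ^ j) * if n = 0 then 1 else 0 := by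
  induction m generalizing n with
  | zero => simp [hp1]
  | succ m ih =>
    rw [pow_succ', hrec.apply_two_mul Nat.one_le_two_pow, prod_range_succ_pow_two_pow
      (fun i => γ (2 ^ i))]
    simp only [ih, sum_range_mul_ite_mul_mul_ite]
    push_cast
    ring_nf

/-- If `p_{1,n} = δ_{n,0}` and the coefficients satisfy the recursion
`p_{k,n} = Σ_{j=1}^{k-1}Σ_{ℓ=0}^{n} G_{k-j,j} p_{k-j,ℓ} p_{j,n-ℓ}
  + 2Σ_{j=1}^{n}Σ_{ℓ=0}^{n-j} G_{k+j,-j} p_{k+j,ℓ} p_{j,n-(j+ℓ)}` for all `k ≥ 2`, `n ≥ 0`,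
then `p_{2^m,n} = (∏_{j=0}^{m-1} γ_{2^{m-j}}^{2^j}) δ_{n,0}` for every `m ≥ 1` and `n ≥ 0`. -/
theorem stmt_18
    (γ : ℤ → ℝ) (p : ℕ → ℕ → ℝ)
    (hp1 : ∀ n : ℕ, p 1 n = if n = 0 then 1 else 0)
    (hrec : ∀ k : ℕ, 2 ≤ k → ∀ n : ℕ,
      p k n = (∑ j ∈ Finset.Ico 1 k, ∑ l ∈ Finset.range (n + 1),
          Gc γ ((k : ℤ) - (j : ℤ)) (j : ℤ) * p (k - j) l * p j (n - l))
        + 2 * ∑ j ∈ Finset.Icc 1 n, ∑ l ∈ Finset.range (n - j + 1),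
            Gc γ ((k : ℤ) + (j : ℤ)) (-(j : ℤ)) * p (k + j) l * p j (n - (j + l))) :
    ∀ m : ℕ, 1 ≤ m → ∀ n : ℕ,
      p (2 ^ m) n =
        (∏ j ∈ Finset.range m, (γ ((2 : ℤ) ^ (m - j))) ^ (2 ^ j)) *
          (if n = 0 then 1 else 0) :=
  fun m _ n => IsCoeffRecursion.apply_two_pow hrec hp1 m n
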